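/- Let k be a field of characteristic ≠ 2 and let φ, φ' be odd-dimensional quadratic forms over k of the same dimension r with trivial discriminant. Let a, λ be nonzero elements of a field extension L of k, and suppose ⟨⟨a⟩⟩⊗φ'_L ≅ ⟨λ⟩·⟨⟨a⟩⟩⊗φ_L. Then the quaternion class (λ, a) is trivial in Br(L), and hence λ is represented by ⟨1,−a⟩ over L and ⟨λ⟩·⟨⟨a⟩⟩ ≅ ⟨⟨a⟩⟩, so that ⟨⟨a⟩⟩⊗φ'_L ≅ ⟨⟨a⟩⟩⊗φ_L. -/

import Mathlib

open scoped BigOperators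

/-- The diagonal quadratic form with weights `w`, as a function on `ι → K`. -/
def diagQF {K : Type} [Field K] {ι : Type} [Fintype ι] (w : ι → K) : (ι → K) → K :=
  fun v => ∑ i, w i * v i ^ 2

/-- `c` is a value represented by the diagonal quadratic form with weights `w`. -/
def RepresentsQF {K : Type} [Field K] {ι : Type} [Fintype ι] (w : ι → K) (c : K) : Prop :=
  ∃ v, diagQF w v = c

/-- Isometry (isomorphism) of diagonal quadratic forms. -/
def QFEquiv (K : Type) [Field K] {ι κ : Type} [Fintype ι] [Fintype κ]
    (w : ι → K) (w' : κ → K) : Prop :=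
  ∃ e : (ι → K) ≃ₗ[K] (κ → K), ∀ v, diagQF w' (e v) = diagQF w v

/-- Scaling a diagonal quadratic form by `c` : the form `⟨c⟩·q`. -/
def smulW {K : Type} [Field K] {ι : Type} (c : K) (w : ι → K) : ι → K := fun i => c * w i

/-- Tensor product of diagonal quadratic forms. -/
def tensorW {K : Type} [Field K] {ι κ : Type} (w₁ : ι → K) (w₂ : κ → K) : ι × κ → K :=
  fun p => w₁ p.1 * w₂ p.2

/-- The 1-fold Pfister form `⟨⟨a⟩⟩ = ⟨1, -a⟩`. -/
def pf1 {K : Type} [Field K] (a : K) : Fin 2 → K := ![1, -a]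

/-- The 2-fold Pfister form `⟨⟨a, d⟩⟩ = ⟨1,-a⟩ ⊗ ⟨1,-d⟩`. -/
def pf2 {K : Type} [Field K] (a d : K) : Fin 2 × Fin 2 → K := tensorW (pf1 a) (pf1 d)

/-- The n-fold Pfister form `⟨⟨a 0, …, a (n-1)⟩⟩`. -/
def pfW {K : Type} [Field K] {n : ℕ} (a : Fin n → K) : (Fin n → Fin 2) → K :=
  fun f => ∏ i, if f i = 0 then 1 else -a i

/-- Orthogonal sum of diagonal quadratic forms. -/
def orthW {K : Type} [Field K] {ι κ : Type} (w₁ : ι → K) (w₂ : κ → K) : ι ⊕ κ → K :=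
  Sum.elim w₁ w₂

/-- The weights of an orthogonal sum of `m` hyperbolic planes. -/
def hypW (K : Type) [Field K] (m : ℕ) : Fin m ⊕ Fin m → K :=
  Sum.elim (fun _ => 1) (fun _ => -1)

/-- Witt equivalence of diagonal quadratic forms: they become isometric after
adding hyperbolic planes. -/
def WittEquiv (K : Type) [Field K] {ι κ : Type} [Fintype ι] [Fintype κ]
    (w : ι → K) (w' : κ → K) : Prop :=
  ∃ m m' : ℕ, QFEquiv K (orthW w (hypW K m)) (orthW w' (hypW K m'))

/-- A diagonal quadratic form is anisotropic. -/
def AnisotropicQF {K : Type} [Field K] {ι : Type} [Fintype ι] (w : ι → K) : Prop :=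
  ∀ v, diagQF w v = 0 → v = 0

/-- Base change of a diagonal quadratic form along a field extension. -/
def bcW {k K : Type} [Field k] [Field K] [Algebra k K] {ι : Type} (w : ι → k) : ι → K :=
  fun i => algebraMap k K (w i)

/-!
The isometry `⟨⟨a⟩⟩ ⊗ φ' ≅ ⟨λ⟩⟨⟨a⟩⟩ ⊗ φ` makes `⟨⟨a⟩⟩ ⊗ (φ' ⊥ -λφ)` hyperbolic. In place of
Clifford invariants we use: if `⟨⟨a⟩⟩ ⊗ ψ` is hyperbolic and `dim ψ = 2K`, then `(-1)^K disc ψ` is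
a value of `⟨⟨a⟩⟩`, i.e. a norm from `F(√a)`. For `a` a square this is clear, since `⟨⟨a⟩⟩` is then
universal. Otherwise an isotropic vector of `⟨⟨a⟩⟩ ⊗ ψ` gives `c ≠ 0` such that `ψ` represents both
`c` and `ac`, whence `ψ ≅ ⟨c, c(a - t²)⟩ ⊥ ρ`. As `t² - a` is a norm,
`⟨⟨a⟩⟩ ⊗ ⟨c, c(a - t²)⟩ ≅ c⟨⟨a⟩⟩ ⊥ -c⟨⟨a⟩⟩` is hyperbolic, so by Witt cancellation `⟨⟨a⟩⟩ ⊗ ρ` is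
hyperbolic and induction applies; the discriminant changes by the norm `t² - a` and a square.

For odd `r` and trivial discriminants, `(-1)^r disc (φ' ⊥ -λφ) = λ^r disc φ' disc φ` is `λ` times
a square, so `λ` is a norm, i.e. represented by `⟨⟨a⟩⟩`, hence a similarity factor of `⟨⟨a⟩⟩`.
-/

namespace QuadraticMap

variable {F V : Type*} [Field F] [AddCommGroup V] [Module F V] (Q : QuadraticForm F V)

lemma map_sub_smul (v u : V) (t : F) :
    Q (v - t • u) = Q v - t * polar Q v u + t ^ 2 * Q u := by
  rw [sub_eq_add_neg, ← neg_smul, QuadraticMap.map_add (⇑Q), QuadraticMap.map_smul,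
    polar_smul_right, smul_eq_mul, smul_eq_mul]
  ring

lemma polarBilin_flip_div_self {u : V} (hu : Q u ≠ 0) :
    ((Q u)⁻¹ • (polarBilin Q).flip u) u = 2 := by
  rw [LinearMap.smul_apply, LinearMap.flip_apply, polarBilin_apply_apply, polar_self,
    smul_eq_mul, nsmul_eq_mul, Nat.cast_ofNat, mul_left_comm, inv_mul_cancel₀ hu, mul_one]

def reflection {u : V} (hu : Q u ≠ 0) : Q.IsometryEquiv Q where
  toLinearEquiv := Module.reflection (Q.polarBilin_flip_div_self hu)
  map_app' v := by
    change Q (Module.reflection (Q.polarBilin_flip_div_self hu) v) = Q v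
    rw [Module.reflection_apply, LinearMap.smul_apply, LinearMap.flip_apply,
      polarBilin_apply_apply, smul_eq_mul, map_sub_smul]
    field_simp
    ring

lemma reflection_apply {u : V} (hu : Q u ≠ 0) (v : V) :
    Q.reflection hu v = v - (polar Q v u / Q u) • u := by
  change Module.reflection (Q.polarBilin_flip_div_self hu) v = _
  simp [Module.reflection_apply, div_eq_inv_mul]

lemma reflection_apply_self {u : V} (hu : Q u ≠ 0) : Q.reflection hu u = -u :=
  Module.reflection_apply_self (Q.polarBilin_flip_div_self hu)

theorem exists_isometryEquiv_apply_eq (h2 : (2 : F) ≠ 0) {x y : V} (hxy : Q x = Q y)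
    (hy : Q y ≠ 0) : ∃ g : Q.IsometryEquiv Q, g x = y := by
  have hsub : Q (x - y) = polar Q x (x - y) := by
    rw [polar_sub_right, polar_self, two_nsmul, ← one_smul F y, map_sub_smul, one_smul, hxy]
    ring
  have hadd : Q (x + y) = polar Q x (x + y) := by
    rw [polar_add_right, polar_self, two_nsmul, QuadraticMap.map_add (⇑Q), hxy]
  -- reflect in `x - y`, or, if that vector is isotropic, in `x + y` and then in `y`
  by_cases h : Q (x - y) = 0
  · have hxy' : Q (x + y) ≠ 0 := by
      have : Q (x + y) + Q (x - y) = 2 * (2 * Q y) := by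
        rw [hadd, hsub, ← polar_add_right, add_add_sub_cancel, polar_add_right, polar_self,
          two_nsmul, hxy]
        ring
      rw [h, add_zero] at this
      rw [this]
      exact mul_ne_zero h2 (mul_ne_zero h2 hy)
    refine ⟨(Q.reflection hxy').trans (Q.reflection hy), ?_⟩
    have : Q.reflection hxy' x = -y := by
      rw [reflection_apply, ← hadd, div_self hxy', one_smul]; abel
    change Q.reflection hy (Q.reflection hxy' x) = y
    rw [this, map_neg, reflection_apply_self, neg_neg]
  · refine ⟨Q.reflection h, ?_⟩
    rw [reflection_apply, ← hsub, div_self h, one_smul]; abel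

end QuadraticMap

lemma mul_eq_sq_of_neg_one_pow_mul_eq_sq {R : Type*} [CommRing R] {P P' x x' : R} (e : ℕ)
    (h : (-1) ^ e * P = x ^ 2) (h' : (-1) ^ e * P' = x' ^ 2) : P' * P = (x' * x) ^ 2 := by
  have hsign : ((-1 : R) ^ e) ^ 2 = 1 := by rw [← pow_mul, mul_comm, pow_mul, neg_one_sq, one_pow]
  linear_combination ((-1) ^ e * P) * h' + x' ^ 2 * h - (P' * P) * hsign

lemma smulW_tensorW {F ι κ : Type} [Field F] (c : F) (τ : κ → F) (w : ι → F) :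
    smulW c (tensorW τ w) = tensorW (smulW c τ) w := by
  funext p
  simp only [smulW, tensorW, mul_assoc]

section DiagonalForms

variable {F : Type} [Field F] {ι κ μ ν : Type} [Fintype ι] [Fintype κ] [Fintype μ] [Fintype ν]

lemma diagQF_eq_weightedSumSquares (w : ι → F) :
    diagQF w = QuadraticMap.weightedSumSquares F w := by
  funext v
  simp [diagQF, sq]

lemma diagQF_orthW (w₁ : ι → F) (w₂ : κ → F) (v : ι ⊕ κ → F) :
    diagQF (orthW w₁ w₂) v = diagQF w₁ (v ∘ Sum.inl) + diagQF w₂ (v ∘ Sum.inr) := by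
  simp [diagQF, Fintype.sum_sum_type, orthW]

lemma diagQF_tensorW (τ : κ → F) (w : ι → F) (v : κ × ι → F) :
    diagQF (tensorW τ w) v = ∑ j, τ j * diagQF w (fun i => v (j, i)) := by
  simp only [diagQF, tensorW, Fintype.sum_prod_type, Finset.mul_sum, mul_assoc]

lemma diagQF_pair (p q : F) (v : Fin 2 → F) : diagQF ![p, q] v = p * v 0 ^ 2 + q * v 1 ^ 2 := by
  simp [diagQF, Fin.sum_univ_two]

lemma diagQF_pair_pair (p q x y : F) : diagQF ![p, q] ![x, y] = p * x ^ 2 + q * y ^ 2 := by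
  simp [diagQF_pair]

lemma diagQF_single [DecidableEq ι] (w : ι → F) (i : ι) : diagQF w (Pi.single i 1) = w i := by
  simp [diagQF, Pi.single_apply]

lemma polar_diagQF_single [DecidableEq ι] (w : ι → F) (v : ι → F) (i : ι) :
    QuadraticMap.polar (diagQF w) v (Pi.single i 1) = 2 * w i * v i := by
  simp only [QuadraticMap.polar, diagQF, ← Finset.sum_sub_distrib]
  rw [Finset.sum_eq_single i (fun j _ hj => by simp [hj]) (by simp)]
  simp only [Pi.add_apply, Pi.single_eq_same]
  ring

lemma polar_diagQF_map {w : ι → F} {w' : κ → F} (e : (ι → F) →ₗ[F] (κ → F))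
    (he : ∀ v, diagQF w' (e v) = diagQF w v) (u v : ι → F) :
    QuadraticMap.polar (diagQF w') (e u) (e v) = QuadraticMap.polar (diagQF w) u v := by
  simp only [QuadraticMap.polar, ← map_add, he]

namespace QFEquiv

lemma refl (w : ι → F) : QFEquiv F w w :=
  ⟨LinearEquiv.refl F _, fun _ => rfl⟩

lemma symm {w : ι → F} {w' : κ → F} (h : QFEquiv F w w') : QFEquiv F w' w := by
  obtain ⟨e, he⟩ := h
  exact ⟨e.symm, fun v => by rw [← he, e.apply_symm_apply]⟩

lemma trans {w : ι → F} {w' : κ → F} {w'' : μ → F} (h : QFEquiv F w w')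
    (h' : QFEquiv F w' w'') : QFEquiv F w w'' := by
  obtain ⟨e, he⟩ := h
  obtain ⟨e', he'⟩ := h'
  exact ⟨e.trans e', fun v => by simp [he, he']⟩

lemma of_equiv {w : ι → F} {w' : κ → F} (σ : ι ≃ κ) (h : ∀ i, w i = w' (σ i)) :
    QFEquiv F w w' := by
  refine ⟨LinearEquiv.funCongrLeft F F σ.symm, fun v => ?_⟩
  simp only [diagQF, LinearEquiv.funCongrLeft_apply, LinearMap.funLeft_apply]
  rw [← σ.sum_comp]
  simp [h]

lemma of_mulVec [DecidableEq ι] {w w' : ι → F} (M : Matrix ι ι F) (hM : M.det ≠ 0)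
    (h : ∀ v, diagQF w' (M.mulVec v) = diagQF w v) : QFEquiv F w w' :=
  ⟨M.toLinearEquiv' (M.invertibleOfIsUnitDet (Ne.isUnit hM)), h⟩

lemma represents {w : ι → F} {w' : κ → F} (h : QFEquiv F w w') {c : F}
    (hc : RepresentsQF w c) : RepresentsQF w' c := by
  obtain ⟨e, he⟩ := h
  obtain ⟨v, rfl⟩ := hc
  exact ⟨e v, he v⟩

lemma isotropic {w : ι → F} {w' : κ → F} (h : QFEquiv F w w') {v : ι → F} (hv : v ≠ 0)
    (hw : diagQF w v = 0) : ∃ v', v' ≠ 0 ∧ diagQF w' v' = 0 := by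
  obtain ⟨e, he⟩ := h
  exact ⟨e v, by simpa using hv, by rw [he, hw]⟩

lemma card_eq {w : ι → F} {w' : κ → F} (h : QFEquiv F w w') :
    Fintype.card ι = Fintype.card κ := by
  obtain ⟨e, -⟩ := h
  simpa using e.finrank_eq

lemma smulW_congr (c : F) {w : ι → F} {w' : κ → F} (h : QFEquiv F w w') :
    QFEquiv F (smulW c w) (smulW c w') := by
  obtain ⟨e, he⟩ := h
  refine ⟨e, fun v => ?_⟩
  simpa [diagQF, smulW, mul_assoc, ← Finset.mul_sum] using congrArg (c * ·) (he v)

lemma mul_sq {w : ι → F} (u : ι → F) (hu : ∀ i, u i ≠ 0) :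
    QFEquiv F w (fun i => w i * u i ^ 2) := by
  refine ⟨LinearEquiv.piCongrRight fun i =>
    LinearEquiv.smulOfNeZero F F (u i)⁻¹ (inv_ne_zero (hu i)),
    fun v => Finset.sum_congr rfl fun i _ => ?_⟩
  simp only [LinearEquiv.piCongrRight_apply, LinearEquiv.smulOfNeZero_apply, smul_eq_mul]
  field_simp [hu i]

lemma orthW_congr {w₁ : ι → F} {w₁' : κ → F} {w₂ : μ → F} {w₂' : ν → F}
    (h₁ : QFEquiv F w₁ w₁') (h₂ : QFEquiv F w₂ w₂') :
    QFEquiv F (orthW w₁ w₂) (orthW w₁' w₂') := by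
  obtain ⟨e₁, he₁⟩ := h₁
  obtain ⟨e₂, he₂⟩ := h₂
  refine ⟨(LinearEquiv.sumArrowLequivProdArrow ι μ F F).trans
    ((e₁.prodCongr e₂).trans (LinearEquiv.sumArrowLequivProdArrow κ ν F F).symm), fun v => ?_⟩
  rw [diagQF_orthW, diagQF_orthW]
  exact congrArg₂ (· + ·) (he₁ _) (he₂ _)

lemma of_forall_blocks {w : κ × ι → F} {w' : κ × μ → F}
    (h : ∀ j, QFEquiv F (fun i => w (j, i)) (fun i => w' (j, i))) : QFEquiv F w w' := by
  choose e he using h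
  refine ⟨(LinearEquiv.curry F F κ ι).trans
    ((LinearEquiv.piCongrRight e).trans (LinearEquiv.curry F F κ μ).symm), fun v => ?_⟩
  simp only [diagQF, Fintype.sum_prod_type]
  exact Finset.sum_congr rfl fun j _ => he j (fun i => v (j, i))

lemma tensorW_congr_right (τ : κ → F) {w : ι → F} {w' : μ → F} (h : QFEquiv F w w') :
    QFEquiv F (tensorW τ w) (tensorW τ w') :=
  of_forall_blocks fun j => h.smulW_congr (τ j)

lemma tensorW_comm (w₁ : ι → F) (w₂ : κ → F) : QFEquiv F (tensorW w₁ w₂) (tensorW w₂ w₁) :=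
  of_equiv (Equiv.prodComm ι κ) fun _ => mul_comm _ _

lemma tensorW_congr_left {τ τ' : κ → F} (h : QFEquiv F τ τ') (w : ι → F) :
    QFEquiv F (tensorW τ w) (tensorW τ' w) :=
  (tensorW_comm τ w).trans ((tensorW_congr_right w h).trans (tensorW_comm w τ'))

lemma tensorW_orthW (τ : κ → F) (w₁ : ι → F) (w₂ : μ → F) :
    QFEquiv F (tensorW τ (orthW w₁ w₂)) (orthW (tensorW τ w₁) (tensorW τ w₂)) :=
  of_equiv (Equiv.prodSumDistrib κ ι μ) (by rintro ⟨j, i | i⟩ <;> rfl)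

lemma orthW_prod_fin_two (u₁ u₂ : ι → F) :
    QFEquiv F (orthW u₁ u₂) (fun p : ι × Fin 2 => ![u₁ p.1, u₂ p.1] p.2) :=
  of_equiv ((Equiv.prodComm ι (Fin 2)).trans
    ((finTwoEquiv.prodCongr (Equiv.refl ι)).trans (Equiv.boolProdEquivSum ι))).symm
    (by rintro (i | i) <;> rfl)

lemma orthW_of_forall_pair {w₁ w₂ w₁' w₂' : ι → F}
    (h : ∀ i, QFEquiv F ![w₁ i, w₂ i] ![w₁' i, w₂' i]) :
    QFEquiv F (orthW w₁ w₂) (orthW w₁' w₂') :=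
  (orthW_prod_fin_two w₁ w₂).trans ((of_forall_blocks h).trans (orthW_prod_fin_two w₁' w₂').symm)

lemma tensorW_pair (τ : ι → F) (c d : F) :
    QFEquiv F (tensorW τ ![c, d]) (orthW (smulW c τ) (smulW d τ)) := by
  refine (of_equiv (Equiv.refl _) fun p => ?_).trans (orthW_prod_fin_two _ _).symm
  obtain ⟨i, j⟩ := p
  fin_cases j <;> simp [tensorW, smulW, mul_comm]

lemma pair_of_matrix {p q p' q' x y z t : F} (hdet : x * t - y * z ≠ 0)
    (h : ∀ u v : F, p' * (x * u + y * v) ^ 2 + q' * (z * u + t * v) ^ 2 = p * u ^ 2 + q * v ^ 2) :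
    QFEquiv F ![p, q] ![p', q'] :=
  of_mulVec !![x, y; z, t] (by rwa [Matrix.det_fin_two_of]) fun v => by
    simpa [diagQF_pair, dotProduct, Fin.sum_univ_two] using h (v 0) (v 1)

lemma pair_of_represents {p q x y b : F} (hb : p * x ^ 2 + q * y ^ 2 = b) (hb0 : b ≠ 0) :
    QFEquiv F ![p, q] ![b, p * q * b] := by
  subst hb
  refine (pair_of_matrix (x := x) (y := -(q * y)) (z := y) (t := p * x) ?_ fun u v => ?_).symm
  · convert hb0 using 1
    ring
  · ring

lemma pair_neg (h2 : (2 : F) ≠ 0) {c : F} (hc : c ≠ 0) : QFEquiv F ![c, -c] ![1, -1] := by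
  refine pair_of_matrix (x := (c + 1) / 2) (y := (c - 1) / 2) (z := (c - 1) / 2)
    (t := (c + 1) / 2) ?_ fun u v => ?_
  · convert hc using 1
    field_simp
    ring
  · field_simp
    ring

lemma orthW_neg_hypW (h2 : (2 : F) ≠ 0) {w : ι → F} (hw : ∀ i, w i ≠ 0) {n : ℕ}
    (hn : Fintype.card ι = n) : QFEquiv F (orthW w (smulW (-1) w)) (hypW F n) := by
  have hpm : QFEquiv F (orthW w (smulW (-1) w)) (orthW (fun _ : ι => (1 : F)) fun _ => -1) :=
    orthW_of_forall_pair fun i => by simpa [smulW] using pair_neg h2 (hw i)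
  exact hpm.trans (of_equiv (Equiv.sumCongr (Fintype.equivFinOfCardEq hn)
    (Fintype.equivFinOfCardEq hn)) (by rintro (i | i) <;> rfl))

lemma orthW_hypW (m n : ℕ) {k : ℕ} (hk : m + n = k) :
    QFEquiv F (orthW (hypW F m) (hypW F n)) (hypW F k) := by
  subst hk
  exact of_equiv ((Equiv.sumSumSumComm _ _ _ _).trans
    (Equiv.sumCongr finSumFinEquiv finSumFinEquiv)) (by rintro ((i | i) | (i | i)) <;> rfl)

lemma of_isometry_fixing_single [DecidableEq ι] [DecidableEq κ] (h2 : (2 : F) ≠ 0) {c : F}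
    (hc : c ≠ 0) {w : ι → F}
    {w' : κ → F} (e : (Unit ⊕ ι → F) ≃ₗ[F] (Unit ⊕ κ → F))
    (he : ∀ v, diagQF (orthW (fun _ : Unit => c) w') (e v) = diagQF (orthW (fun _ => c) w) v)
    (hfix : e (Pi.single (Sum.inl ()) 1) = Pi.single (Sum.inl ()) 1) : QFEquiv F w w' := by
  -- `e` preserves the orthogonal complement `{v | v (inl ()) = 0}` of the fixed vector
  have hfirst : ∀ v : ι → F, e (Sum.elim (0 : Unit → F) v) (Sum.inl ()) = 0 := fun v => by
    have := polar_diagQF_map e.toLinearMap he (Sum.elim (0 : Unit → F) v)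
      (Pi.single (Sum.inl ()) 1)
    rw [LinearEquiv.coe_coe, hfix, polar_diagQF_single, polar_diagQF_single] at this
    simpa [orthW, h2, hc] using this
  let φ : (ι → F) →ₗ[F] (κ → F) := LinearMap.funLeft F F Sum.inr ∘ₗ e.toLinearMap ∘ₗ
    ((LinearEquiv.sumArrowLequivProdArrow Unit ι F F).symm.toLinearMap ∘ₗ LinearMap.inr F _ _)
  have hφ : ∀ v, Sum.elim (0 : Unit → F) (φ v) = e (Sum.elim (0 : Unit → F) v) := fun v => by
    ext (u | j)
    · exact (hfirst v).symm
    · rfl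
  have hφinj : Function.Injective φ := by
    rw [← LinearMap.ker_eq_bot, LinearMap.ker_eq_bot']
    intro v hv
    have h0 : e (Sum.elim (0 : Unit → F) v) = 0 := by rw [← hφ, hv]; ext (u | j) <;> rfl
    funext i
    simpa using congrFun (e.map_eq_zero_iff.1 h0) (Sum.inr i)
  have hcard := QFEquiv.card_eq ⟨e, he⟩
  refine ⟨φ.linearEquivOfInjective hφinj ?_, fun v => ?_⟩
  · simp only [Fintype.card_sum] at hcard
    simp only [Module.finrank_fintype_fun_eq_card]
    omega
  · have := he (Sum.elim (0 : Unit → F) v)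
    rw [← hφ] at this
    simpa [diagQF_orthW, diagQF, orthW] using this

lemma cancel_unit (h2 : (2 : F) ≠ 0) {c : F} (hc : c ≠ 0) {w : ι → F} {w' : κ → F}
    (h : QFEquiv F (orthW (fun _ : Unit => c) w) (orthW (fun _ : Unit => c) w')) :
    QFEquiv F w w' := by
  classical
  obtain ⟨f, hf⟩ := h
  obtain ⟨g, hg⟩ := (QuadraticMap.weightedSumSquares F (orthW (fun _ : Unit => c) w'))
    |>.exists_isometryEquiv_apply_eq h2
      (x := f (Pi.single (Sum.inl ()) 1)) (y := Pi.single (Sum.inl ()) 1)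
      (by rw [← diagQF_eq_weightedSumSquares, hf, diagQF_single, diagQF_single]; rfl)
      (by rwa [← diagQF_eq_weightedSumSquares, diagQF_single])
  refine of_isometry_fixing_single h2 hc (f.trans g.toLinearEquiv) (fun v => ?_) hg
  rw [← hf v, diagQF_eq_weightedSumSquares]
  exact g.map_app (f v)

lemma cancel_left (h2 : (2 : F) ≠ 0) {u : μ → F} (hu : ∀ j, u j ≠ 0) {w : ι → F}
    {w' : κ → F} (h : QFEquiv F (orthW u w) (orthW u w')) : QFEquiv F w w' := by
  refine Fintype.induction_empty_option (P := fun μ _ => ∀ u : μ → F, (∀ j, u j ≠ 0) →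
    QFEquiv F (orthW u w) (orthW u w') → QFEquiv F w w') ?_ ?_ ?_ μ u hu h
  · intro α β _ σ hα u hu h
    let := Fintype.ofEquiv β σ.symm
    have hσ : ∀ {γ : Type} [Fintype γ] (v : γ → F),
        QFEquiv F (orthW (u ∘ σ) v) (orthW u v) := fun v =>
      of_equiv (σ.sumCongr (Equiv.refl _)) (by rintro (a | i) <;> rfl)
    exact hα (u ∘ σ) (fun a => hu (σ a)) (((hσ w).trans h).trans (hσ w').symm)
  · intro u _ h
    have hε : ∀ {γ : Type} [Fintype γ] (v : γ → F), QFEquiv F (orthW u v) v := fun v =>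
      of_equiv (Equiv.emptySum PEmpty _) (by rintro (x | i); exacts [x.elim, rfl])
    exact ((hε w).symm.trans h).trans (hε w')
  · intro α _ hα u hu h
    have hsplit : ∀ {γ : Type} [Fintype γ] (v : γ → F),
        QFEquiv F (orthW u v) (orthW (fun _ : Unit => u none) (orthW (u ∘ some) v)) := fun v =>
      of_equiv (((Equiv.optionEquivSumPUnit α).sumCongr (Equiv.refl _)).trans
        (((Equiv.sumComm _ _).sumCongr (Equiv.refl _)).trans (Equiv.sumAssoc _ _ _)))
        (by rintro ((_ | a) | i) <;> rfl)
    exact hα (u ∘ some) (fun a => hu (some a)) <| cancel_unit h2 (hu none) <|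
      ((hsplit w).symm.trans h).trans (hsplit w')

end QFEquiv

lemma represents_of_isotropic (h2 : (2 : F) ≠ 0) {w : ι → F} (hw : ∀ i, w i ≠ 0) {v : ι → F}
    (hv : v ≠ 0) (hwv : diagQF w v = 0) (c : F) : RepresentsQF w c := by
  classical
  obtain ⟨i, hi⟩ := Function.ne_iff.1 hv
  have hpolar := polar_diagQF_single w v i
  refine ⟨Pi.single i 1 + ((c - w i) / (2 * w i * v i)) • v, ?_⟩
  rw [QuadraticMap.map_add (diagQF w), QuadraticMap.polar_comm, diagQF_single]
  rw [diagQF_eq_weightedSumSquares] at hpolar hwv ⊢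
  rw [QuadraticMap.map_smul, QuadraticMap.polar_smul_left, hpolar, hwv]
  have hvi : v i ≠ 0 := hi
  have := hw i
  simp only [smul_eq_mul, mul_zero, add_zero]
  field_simp
  ring

lemma isotropic_hypW (n : ℕ) (hn : n ≠ 0) : ∃ v, v ≠ 0 ∧ diagQF (hypW F n) v = 0 := by
  refine ⟨1, fun h => ?_, ?_⟩
  · simpa using congrFun h (Sum.inl ⟨0, Nat.pos_of_ne_zero hn⟩)
  · simp [diagQF, hypW, Fintype.sum_sum_type]

lemma hypW_ne_zero (n : ℕ) (j : Fin n ⊕ Fin n) : hypW F n j ≠ 0 := by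
  rcases j with j | j <;> simp [hypW]

lemma discr'_weightedSumSquares [DecidableEq ι] [Invertible (2 : F)] (w : ι → F) :
    QuadraticForm.discr' (QuadraticMap.weightedSumSquares F w) = ∏ i, w i := by
  rw [QuadraticForm.discr', ← Matrix.det_diagonal]
  congr 1
  ext i j
  rw [QuadraticForm.toMatrix', LinearMap.toMatrix₂'_apply, QuadraticMap.associated_apply]
  change ⅟2 • QuadraticMap.polar _ _ _ = _
  rw [← diagQF_eq_weightedSumSquares, polar_diagQF_single, Matrix.diagonal_apply]
  rcases eq_or_ne i j with rfl | hij
  · rw [Pi.single_eq_same, if_pos rfl, Module.End.smul_def,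
      QuadraticMap.half_moduleEnd_apply_eq_half_smul, smul_eq_mul, mul_one, ← mul_assoc,
      invOf_mul_self, one_mul]
  · rw [Pi.single_eq_of_ne hij.symm, if_neg hij, mul_zero, smul_zero]

lemma QFEquiv.exists_prod_eq (h2 : (2 : F) ≠ 0) {w : ι → F} {w' : κ → F} (h : QFEquiv F w w') :
    ∃ s : F, s ≠ 0 ∧ ∏ i, w i = s ^ 2 * ∏ j, w' j := by
  classical
  let := invertibleOfNonzero h2
  set σ := Fintype.equivOfCardEq h.card_eq
  obtain ⟨e, he⟩ := h.trans (QFEquiv.of_equiv σ (w' := w') fun i => rfl).symm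
  have hcomp : (QuadraticMap.weightedSumSquares F (w' ∘ σ)).comp e.toLinearMap =
      QuadraticMap.weightedSumSquares F w := by
    ext v
    rw [QuadraticMap.comp_apply, ← diagQF_eq_weightedSumSquares, ← diagQF_eq_weightedSumSquares]
    exact he v
  have hdisc := QuadraticForm.discr'_comp (Q := QuadraticMap.weightedSumSquares F (w' ∘ σ))
    e.toLinearMap
  rw [hcomp, discr'_weightedSumSquares, discr'_weightedSumSquares, LinearMap.det_toMatrix',
    Function.comp_def, σ.prod_comp w'] at hdisc
  exact ⟨_, e.isUnit_det'.ne_zero, by rw [hdisc, sq]⟩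

end DiagonalForms

section Pfister

variable {F : Type} [Field F]

lemma pf1_ne_zero {a : F} (ha : a ≠ 0) (s : Fin 2) : pf1 a s ≠ 0 := by
  fin_cases s <;> simp [pf1, ha]

lemma RepresentsQF.pair_iff {p q c : F} :
    RepresentsQF ![p, q] c ↔ ∃ x y, p * x ^ 2 + q * y ^ 2 = c :=
  ⟨fun ⟨v, hv⟩ => ⟨v 0, v 1, by rw [← hv, diagQF_pair]⟩,
    fun ⟨x, y, h⟩ => ⟨![x, y], by rw [diagQF_pair_pair, h]⟩⟩

lemma represents_pf1_iff {a c : F} : RepresentsQF (pf1 a) c ↔ ∃ x y, x ^ 2 - a * y ^ 2 = c := by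
  simp only [pf1, RepresentsQF.pair_iff, neg_mul, one_mul, ← sub_eq_add_neg]

lemma represents_pf1_sq (a s : F) : RepresentsQF (pf1 a) (s ^ 2) :=
  represents_pf1_iff.2 ⟨s, 0, by ring⟩

lemma represents_pf1_of_isSquare (h2 : (2 : F) ≠ 0) {a : F} (ha : a ≠ 0) (hsq : IsSquare a)
    (c : F) : RepresentsQF (pf1 a) c := by
  obtain ⟨s, rfl⟩ := hsq
  refine represents_of_isotropic h2 (pf1_ne_zero ha) (v := ![s, 1])
    (fun h => one_ne_zero (congrFun h 1)) ?_ c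
  rw [pf1, diagQF_pair_pair]
  ring

lemma RepresentsQF.pf1_mul {a c d : F} (hc : RepresentsQF (pf1 a) c)
    (hd : RepresentsQF (pf1 a) d) : RepresentsQF (pf1 a) (c * d) := by
  obtain ⟨x, y, rfl⟩ := represents_pf1_iff.1 hc
  obtain ⟨x', y', rfl⟩ := represents_pf1_iff.1 hd
  exact represents_pf1_iff.2 ⟨x * x' + a * y * y', x * y' + y * x', by ring⟩

lemma RepresentsQF.pf1_of_mul_sq {a c s : F} (hs : s ≠ 0)
    (h : RepresentsQF (pf1 a) (c * s ^ 2)) : RepresentsQF (pf1 a) c := by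
  simpa [hs] using h.pf1_mul (represents_pf1_sq a s⁻¹)

lemma RepresentsQF.pf1_of_odd_pow_mul_sq {a c s : F} {r : ℕ} (hr : Odd r) (hc : c ≠ 0)
    (hs : s ≠ 0) (h : RepresentsQF (pf1 a) (c ^ r * s ^ 2)) : RepresentsQF (pf1 a) c := by
  obtain ⟨m, rfl⟩ := hr
  refine RepresentsQF.pf1_of_mul_sq (mul_ne_zero (pow_ne_zero m hc) hs) ?_
  convert h using 1
  ring

lemma QFEquiv.smulW_pf1 {a c : F} (hc : c ≠ 0) (h : RepresentsQF (pf1 a) c) :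
    QFEquiv F (smulW c (pf1 a)) (pf1 a) := by
  obtain ⟨x, y, rfl⟩ := represents_pf1_iff.1 h
  have hpair : smulW (x ^ 2 - a * y ^ 2) (pf1 a) =
      ![x ^ 2 - a * y ^ 2, -a * (x ^ 2 - a * y ^ 2)] := by
    funext i
    fin_cases i <;> simp [smulW, pf1, mul_comm]
  rw [hpair]
  refine pair_of_matrix (x := x) (y := a * y) (z := y) (t := x) ?_ fun u v => ?_
  · convert hc using 1
    ring
  · ring

lemma QFEquiv.tensorW_pf1_pair_hypW (h2 : (2 : F) ≠ 0) {a c t : F} (ha : a ≠ 0) (hc : c ≠ 0)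
    (ht : t ^ 2 - a ≠ 0) : QFEquiv F (tensorW (pf1 a) ![c, c * (a - t ^ 2)]) (hypW F 2) := by
  have hnorm : QFEquiv F (smulW (c * (a - t ^ 2)) (pf1 a)) (smulW (-1) (smulW c (pf1 a))) := by
    have := (smulW_pf1 ht (represents_pf1_iff (a := a).2 ⟨t, 1, by ring⟩)).smulW_congr (-c)
    convert this using 1 <;> funext i <;> simp only [smulW] <;> ring
  exact (tensorW_pair _ _ _).trans (((QFEquiv.refl _).orthW_congr hnorm).trans
    (orthW_neg_hypW h2 (fun s => mul_ne_zero hc (pf1_ne_zero ha s)) (Fintype.card_fin 2)))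

end Pfister

section Splitting

variable {F : Type} [Field F]

lemma QFEquiv.cons_orthW {n : ℕ} (c : F) (w : Fin n → F) :
    QFEquiv F (Fin.cons c w : Fin (n + 1) → F) (orthW (fun _ : Unit => c) w) :=
  of_equiv ((finSuccEquiv n).trans ((Equiv.optionEquivSumPUnit _).trans (Equiv.sumComm _ _)))
    (fun i => by cases i using Fin.cases <;> simp [orthW])

lemma QFEquiv.cons_cons_orthW {n : ℕ} (p q : F) (w : Fin n → F) :
    QFEquiv F (Fin.cons p (Fin.cons q w) : Fin (n + 2) → F) (orthW ![p, q] w) := by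
  refine QFEquiv.symm (of_equiv (finSumFinEquiv.trans (finCongr (Nat.add_comm 2 n))) ?_)
  rintro (i | i)
  · fin_cases i <;> rfl
  · have : i.addNat 2 = i.succ.succ := Fin.ext rfl
    simp [this, orthW]

lemma QFEquiv.cons_congr {n m : ℕ} (c : F) {w : Fin n → F} {w' : Fin m → F}
    (h : QFEquiv F w w') : QFEquiv F (Fin.cons c w : Fin (n + 1) → F) (Fin.cons c w') :=
  (cons_orthW c w).trans (((QFEquiv.refl _).orthW_congr h).trans (cons_orthW c w').symm)

lemma QFEquiv.cons_cons_congr {n : ℕ} {p q p' q' : F} (w : Fin n → F)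
    (h : QFEquiv F ![p, q] ![p', q']) :
    QFEquiv F (Fin.cons p (Fin.cons q w) : Fin (n + 2) → F) (Fin.cons p' (Fin.cons q' w)) :=
  (cons_cons_orthW p q w).trans ((h.orthW_congr (QFEquiv.refl w)).trans
    (cons_cons_orthW p' q' w).symm)

lemma QFEquiv.cons_tail_of_mul_sq {n : ℕ} {ψ : Fin (n + 1) → F} {x c : F} (hx : x ≠ 0)
    (hc : ψ 0 * x ^ 2 = c) : QFEquiv F ψ (Fin.cons c (Fin.tail ψ)) := by
  convert QFEquiv.mul_sq (w := ψ) (Fin.cons x 1) (Fin.cases hx fun _ => one_ne_zero) using 1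
  funext i
  cases i using Fin.cases <;> simp [Fin.tail, hc]

theorem exists_qfEquiv_cons_of_represents {c : F} (hc : c ≠ 0) {n : ℕ} {ψ : Fin (n + 1) → F}
    (hψ : ∀ i, ψ i ≠ 0) (hrep : RepresentsQF ψ c) :
    ∃ ρ : Fin n → F, (∀ i, ρ i ≠ 0) ∧ QFEquiv F ψ (Fin.cons c ρ) := by
  obtain ⟨v, hv⟩ := hrep
  set e := diagQF (Fin.tail ψ) (Fin.tail v)
  have hsplit : ψ 0 * v 0 ^ 2 + e * 1 ^ 2 = c := by
    rw [← hv, diagQF, Fin.sum_univ_succ, one_pow, mul_one]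
    rfl
  -- either rescale the first coordinate, or split `⟨e⟩` off the tail and turn the binary form
  -- `⟨ψ 0, e⟩`, which represents `c`, into `⟨c, ψ 0 * e * c⟩`
  by_cases he : e = 0
  · refine ⟨Fin.tail ψ, fun i => hψ _, QFEquiv.cons_tail_of_mul_sq (x := v 0) ?_ ?_⟩
    · rintro h0
      apply hc
      rw [← hsplit, he, h0]
      ring
    · linear_combination hsplit - he
  cases n with
  | zero => exact absurd (by simp [e, diagQF]) he
  | succ n =>
    obtain ⟨ρ, hρ, hψρ⟩ :=
      exists_qfEquiv_cons_of_represents (ψ := Fin.tail ψ) he (fun i => hψ _) ⟨Fin.tail v, rfl⟩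
    refine ⟨Fin.cons (ψ 0 * e * c) ρ, Fin.cases (by simp [hψ 0, he, hc]) (by simpa using hρ), ?_⟩
    have hψ' : QFEquiv F ψ (Fin.cons (ψ 0) (Fin.cons e ρ)) := by
      simpa only [Fin.cons_self_tail] using QFEquiv.cons_congr (ψ 0) hψρ
    exact hψ'.trans (QFEquiv.cons_cons_congr ρ (QFEquiv.pair_of_represents hsplit hc))

lemma QFEquiv.tensorW_pf1_cons_cons (h2 : (2 : F) ≠ 0) {a c t : F} (ha : a ≠ 0) (hc : c ≠ 0)
    (ht : t ^ 2 - a ≠ 0) {n : ℕ} (ρ : Fin n → F) :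
    QFEquiv F (tensorW (pf1 a) (Fin.cons c (Fin.cons (c * (a - t ^ 2)) ρ) : Fin (n + 2) → F))
      (orthW (hypW F 2) (tensorW (pf1 a) ρ)) :=
  (tensorW_congr_right _ (cons_cons_orthW _ _ ρ)).trans ((tensorW_orthW _ _ _).trans
    ((tensorW_pf1_pair_hypW h2 ha hc ht).orthW_congr (QFEquiv.refl _)))

end Splitting

section Hyperbolic

variable {F : Type} [Field F] {ι κ : Type} [Fintype ι] [Fintype κ]

lemma exists_represents_of_isotropic_tensorW_pf1 (h2 : (2 : F) ≠ 0) {a : F} {ψ : ι → F}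
    (hψ : ∀ i, ψ i ≠ 0) {V : Fin 2 × ι → F} (hV : V ≠ 0)
    (hVψ : diagQF (tensorW (pf1 a) ψ) V = 0) :
    ∃ c, c ≠ 0 ∧ RepresentsQF ψ c ∧ RepresentsQF ψ (a * c) := by
  set v₀ : ι → F := fun i => V (0, i)
  set v₁ : ι → F := fun i => V (1, i)
  have hkey : diagQF ψ v₀ = a * diagQF ψ v₁ := by
    simp only [diagQF_tensorW, Fin.sum_univ_two, pf1] at hVψ
    simp only [Matrix.cons_val_zero, Matrix.cons_val_one] at hVψ
    linear_combination hVψ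
  by_cases h₁ : diagQF ψ v₁ = 0
  · have hiso : ∃ v, v ≠ 0 ∧ diagQF ψ v = 0 := by
      by_cases hv₁ : v₁ = 0
      · refine ⟨v₀, fun hv₀ => hV ?_, by rw [hkey, h₁, mul_zero]⟩
        ext ⟨j, i⟩
        fin_cases j
        exacts [congrFun hv₀ i, congrFun hv₁ i]
      · exact ⟨v₁, hv₁, h₁⟩
    obtain ⟨v, hv, hψv⟩ := hiso
    exact ⟨1, one_ne_zero, represents_of_isotropic h2 hψ hv hψv _,
      represents_of_isotropic h2 hψ hv hψv _⟩
  · exact ⟨_, h₁, ⟨v₁, rfl⟩, ⟨v₀, hkey⟩⟩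

lemma exists_qfEquiv_cons_cons_of_isotropic (h2 : (2 : F) ≠ 0) {a : F} (hsq : ¬IsSquare a)
    {ψ : ι → F} (hψ : ∀ i, ψ i ≠ 0) {n : ℕ} (hcard : Fintype.card ι = n + 2)
    {V : Fin 2 × ι → F} (hV : V ≠ 0) (hVψ : diagQF (tensorW (pf1 a) ψ) V = 0) :
    ∃ (c t : F) (ρ : Fin n → F), c ≠ 0 ∧ t ^ 2 - a ≠ 0 ∧ (∀ i, ρ i ≠ 0) ∧
      QFEquiv F ψ (Fin.cons c (Fin.cons (c * (a - t ^ 2)) ρ)) := by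
  obtain ⟨c, hc, hψc, hψac⟩ := exists_represents_of_isotropic_tensorW_pf1 h2 hψ hV hVψ
  set σ := Fintype.equivFinOfCardEq hcard
  have hσ : QFEquiv F ψ (ψ ∘ σ.symm) := QFEquiv.of_equiv σ (by simp)
  obtain ⟨ρ, hρ, hψρ⟩ := exists_qfEquiv_cons_of_represents hc (fun i => hψ _) (hσ.represents hψc)
  obtain ⟨v, hv⟩ := (hσ.trans hψρ).represents hψac
  have ht : v 0 ^ 2 - a ≠ 0 := fun h => hsq ⟨v 0, by linear_combination -h⟩
  have hd : c * (a - v 0 ^ 2) ≠ 0 := mul_ne_zero hc fun h => ht (by linear_combination -h)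
  have hρd : RepresentsQF ρ (c * (a - v 0 ^ 2)) := by
    refine ⟨Fin.tail v, ?_⟩
    rw [diagQF, Fin.sum_univ_succ] at hv
    simp only [Fin.cons_zero, Fin.cons_succ] at hv
    simp only [diagQF, Fin.tail]
    linear_combination hv
  obtain ⟨ρ', hρ', hρρ'⟩ := exists_qfEquiv_cons_of_represents hd hρ hρd
  exact ⟨c, v 0, ρ', hc, ht, hρ', hσ.trans (hψρ.trans (QFEquiv.cons_congr c hρρ'))⟩

theorem represents_pf1_prod_of_hyperbolic (h2 : (2 : F) ≠ 0) {a : F} (ha : a ≠ 0) {K : ℕ}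
    {ψ : ι → F} (hψ : ∀ i, ψ i ≠ 0) (hhyp : QFEquiv F (tensorW (pf1 a) ψ) (hypW F (2 * K))) :
    RepresentsQF (pf1 a) ((-1) ^ K * ∏ i, ψ i) := by
  by_cases hsq : IsSquare a
  · exact represents_pf1_of_isSquare h2 ha hsq _
  induction K generalizing ι with
  | zero =>
    have hcard := hhyp.card_eq
    have : IsEmpty ι := Fintype.card_eq_zero_iff.1 (by simpa using hcard)
    simpa using represents_pf1_sq a 1
  | succ K ih =>
    have hcard := hhyp.card_eq
    simp only [Fintype.card_prod, Fintype.card_fin, Fintype.card_sum] at hcard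
    obtain ⟨V, hV, hVψ⟩ := isotropic_hypW (F := F) (2 * (K + 1)) (by omega)
    obtain ⟨V, hV, hVψ⟩ := hhyp.symm.isotropic hV hVψ
    obtain ⟨c, t, ρ, hc, ht, hρ, hψρ⟩ :=
      exists_qfEquiv_cons_cons_of_isotropic h2 hsq hψ (n := 2 * K) (by omega) hV hVψ
    have hhypρ : QFEquiv F (tensorW (pf1 a) ρ) (hypW F (2 * K)) :=
      QFEquiv.cancel_left h2 (hypW_ne_zero 2) <|
        (QFEquiv.tensorW_pf1_cons_cons h2 ha hc ht ρ).symm.trans <|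
          (QFEquiv.tensorW_congr_right _ hψρ).symm.trans <|
            hhyp.trans (QFEquiv.orthW_hypW 2 (2 * K) (by ring)).symm
    obtain ⟨s, hs, hprod⟩ := hψρ.exists_prod_eq h2
    have hval : (-1) ^ (K + 1) * ∏ i, ψ i =
        (t ^ 2 - a) * ((-1) ^ K * ∏ i, ρ i) * (s * c) ^ 2 := by
      rw [hprod, Fin.prod_univ_succ, Fin.prod_univ_succ]
      simp only [Fin.cons_zero, Fin.cons_succ]
      ring
    rw [hval]
    exact ((represents_pf1_iff.2 ⟨t, 1, by ring⟩).pf1_mul (ih hρ hhypρ)).pf1_mul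
      (represents_pf1_sq a _)

lemma QFEquiv.tensorW_orthW_smulW_neg_hypW (h2 : (2 : F) ≠ 0) {τ : κ → F} {φ φ' : ι → F}
    {c : F} (hτ : ∀ j, τ j ≠ 0) (hφ : ∀ i, φ i ≠ 0) (hc : c ≠ 0)
    (h : QFEquiv F (tensorW τ φ') (smulW c (tensorW τ φ))) {n : ℕ}
    (hn : Fintype.card κ * Fintype.card ι = n) :
    QFEquiv F (tensorW τ (orthW φ' (smulW (-c) φ))) (hypW F n) := by
  have hneg : tensorW τ (smulW (-c) φ) = smulW (-1) (smulW c (tensorW τ φ)) := by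
    funext p
    simp only [tensorW, smulW]
    ring
  have hw : ∀ p, smulW c (tensorW τ φ) p ≠ 0 := fun p =>
    mul_ne_zero hc (mul_ne_zero (hτ p.1) (hφ p.2))
  have hcard : Fintype.card (κ × ι) = n := by rw [Fintype.card_prod, hn]
  refine (tensorW_orthW τ φ' _).trans ?_
  rw [hneg]
  exact (h.orthW_congr (QFEquiv.refl _)).trans (orthW_neg_hypW h2 hw hcard)

lemma neg_one_pow_mul_prod_orthW_smulW_neg {r : ℕ} (hr : Odd r) (φ φ' : Fin r → F) (c : F) :
    (-1) ^ r * ∏ j, orthW φ' (smulW (-c) φ) j = c ^ r * ((∏ i, φ' i) * ∏ i, φ i) := by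
  rw [Fintype.prod_sum_type]
  simp only [orthW, Sum.elim_inl, Sum.elim_inr, smulW, Finset.prod_mul_distrib,
    Finset.prod_const, Finset.card_univ, Fintype.card_fin, hr.neg_pow]
  ring

end Hyperbolic

/-- for odd-dimensional forms `φ, φ'` of trivial (signed) discriminant
over `k` and `a, λ ∈ Lˣ` for an extension `L/k`, if `⟨⟨a⟩⟩⊗φ'_L ≅ ⟨λ⟩·⟨⟨a⟩⟩⊗φ_L` then
the quaternion class `(λ,a)` is trivial in `Br(L)` — equivalently `λ` is represented
by `⟨1,−a⟩` over `L` — hence `⟨λ⟩·⟨⟨a⟩⟩ ≅ ⟨⟨a⟩⟩` and `⟨⟨a⟩⟩⊗φ'_L ≅ ⟨⟨a⟩⟩⊗φ_L`. -/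
theorem stmt_12 {k L : Type} [Field k] [Field L] [Algebra k L]
    (hchar : (2 : k) ≠ 0)
    {r : ℕ} (hr : Odd r) (φ φ' : Fin r → k)
    (hφ : ∀ i, φ i ≠ 0) (hφ' : ∀ i, φ' i ≠ 0)
    (hdisc : ∃ x : k, x ≠ 0 ∧ (-1 : k) ^ (r * (r - 1) / 2) * ∏ i, φ i = x ^ 2)
    (hdisc' : ∃ x : k, x ≠ 0 ∧ (-1 : k) ^ (r * (r - 1) / 2) * ∏ i, φ' i = x ^ 2)
    (a lam : L) (ha : a ≠ 0) (hlam : lam ≠ 0)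
    (hiso : QFEquiv L (tensorW (pf1 a) (fun i => algebraMap k L (φ' i)))
      (smulW lam (tensorW (pf1 a) (fun i => algebraMap k L (φ i))))) :
    RepresentsQF (pf1 a) lam ∧
    QFEquiv L (smulW lam (pf1 a)) (pf1 a) ∧
    QFEquiv L (tensorW (pf1 a) (fun i => algebraMap k L (φ' i)))
      (tensorW (pf1 a) (fun i => algebraMap k L (φ i))) := by
  have h2 : (2 : L) ≠ 0 := by
    rw [← map_ofNat (algebraMap k L) 2]
    exact (map_ne_zero _).2 hchar
  set φL : Fin r → L := fun i => algebraMap k L (φ i)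
  set φL' : Fin r → L := fun i => algebraMap k L (φ' i)
  have hφL : ∀ i, φL i ≠ 0 := fun i => (map_ne_zero _).2 (hφ i)
  have hψ : ∀ j, orthW φL' (smulW (-lam) φL) j ≠ 0 := by
    rintro (i | i)
    exacts [(map_ne_zero _).2 (hφ' i), mul_ne_zero (neg_ne_zero.2 hlam) (hφL i)]
  have hrep := represents_pf1_prod_of_hyperbolic h2 ha hψ (K := r)
    (QFEquiv.tensorW_orthW_smulW_neg_hypW h2 (pf1_ne_zero ha) hφL hlam hiso (by simp))
  obtain ⟨x, hx, hφx⟩ := hdisc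
  obtain ⟨x', hx', hφx'⟩ := hdisc'
  have hprod : (∏ i, φL' i) * ∏ i, φL i = algebraMap k L (x' * x) ^ 2 := by
    simpa [φL, φL', map_prod] using
      congrArg (algebraMap k L) (mul_eq_sq_of_neg_one_pow_mul_eq_sq _ hφx hφx')
  rw [neg_one_pow_mul_prod_orthW_smulW_neg hr, hprod] at hrep
  have hlamrep := hrep.pf1_of_odd_pow_mul_sq hr hlam ((map_ne_zero _).2 (mul_ne_zero hx' hx))
  refine ⟨hlamrep, QFEquiv.smulW_pf1 hlam hlamrep, hiso.trans ?_⟩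
  rw [smulW_tensorW]
  exact (QFEquiv.smulW_pf1 hlam hlamrep).tensorW_congr_left φL
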